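/- arXiv:2008.07258 — 2 statements merged into one kernel-verified Lean document; each statement's English description precedes it below -/
import Mathlib

section
/- Let X be a Banach space and suppose that for every norm-one functional x* ∈ X* and every β > 0, the set C = (1/2)S(x*, β) + (1/2)S(−x*, β) has the property that for every δ > 0 and every x ∈ C there exists y ∈ C with ‖x − y‖ > 1 + ‖x‖ − δ. Then for every norm-one functional x* ∈ X*, every α > 0, every ε > 0 and every x in the unit sphere S_X, there exists s ∈ B_X with Re x*(s) > 1 − α and ‖x − s‖ > 2 − ε. -/
/-!
Put `t•x` (with `t` small) into `C = ½S(f, α) + ½S(-f, α)` as the midpoint of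
`t•x + (1 - t)•p` and `t•x - (1 - t)•p`, where `p` lies deep in the slice `S(f, α/2)`.
The hypothesis gives `½a + ½b ∈ C` with `a ∈ S(f, α)` and `‖t•x - ½a - ½b‖ > 1 + t - tε`.
Splitting `t•x - ½a - ½b = t•(x - a) - (½ - t)•a - ½b` bounds the left side by
`t‖x - a‖ + 1 - t`, hence `‖x - a‖ > 2 - ε`.
-/

/-- The slice `S(f, β)` of the closed unit ball of `X` determined by a functional `f`
and `β > 0`: the set of points `x` of the closed unit ball with `Re (f x) > 1 - β`. -/
def ballSlice {𝕜 : Type*} [RCLike 𝕜] {X : Type*} [NormedAddCommGroup X] [NormedSpace 𝕜 X]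
    (f : X →L[𝕜] 𝕜) (β : ℝ) : Set X :=
  {x : X | ‖x‖ ≤ 1 ∧ 1 - β < RCLike.re (f x)}

open RCLike ComplexConjugate

section
variable {𝕜 : Type*} [RCLike 𝕜] {X : Type*} [NormedAddCommGroup X] [NormedSpace 𝕜 X]

theorem exists_norm_le_one_lt_re_apply (f : X →L[𝕜] 𝕜) {r : ℝ} (hr : r < ‖f‖) :
    ∃ p : X, ‖p‖ ≤ 1 ∧ r < re (f p) := by
  obtain ⟨z, hz, hrz⟩ := f.exists_lt_apply_of_lt_opNorm hr
  set u : 𝕜 := (‖f z‖⁻¹ : ℝ) * conj (f z)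
  have hu : ‖u‖ ≤ 1 := by
    rcases eq_or_ne (f z) 0 with h | h <;> simp [u, h]
  have hfu : f (u • z) = ‖f z‖ := by
    rcases eq_or_ne (f z) 0 with h | h
    · simp [u, h]
    · rw [map_smul, smul_eq_mul, mul_assoc, RCLike.conj_mul]
      push_cast
      field_simp
  refine ⟨u • z, ?_, ?_⟩
  · calc ‖u • z‖ = ‖u‖ * ‖z‖ := norm_smul u z
      _ ≤ 1 := by nlinarith [norm_nonneg u, norm_nonneg z]
  · rwa [hfu, ofReal_re]

theorem ballSlice_mono {f : X →L[𝕜] 𝕜} {β γ : ℝ} (h : β ≤ γ) : ballSlice f β ⊆ ballSlice f γ :=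
  fun _ ⟨hy, hfy⟩ => ⟨hy, by linarith⟩

theorem neg_mem_ballSlice_neg {f : X →L[𝕜] 𝕜} {β : ℝ} {y : X} (hy : y ∈ ballSlice f β) :
    -y ∈ ballSlice (-f) β := by
  simpa [ballSlice] using hy

theorem mem_ballSlice_of_norm_sub_le {f : X →L[𝕜] 𝕜} (hf : ‖f‖ ≤ 1) {β r : ℝ} {y z : X}
    (hz : z ∈ ballSlice f β) (hy : ‖y‖ ≤ 1) (hyz : ‖y - z‖ ≤ r) : y ∈ ballSlice f (β + r) := by
  have hre : re (f (z - y)) ≤ r := calc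
    re (f (z - y)) ≤ ‖f (z - y)‖ := re_le_norm _
    _ ≤ ‖f‖ * ‖z - y‖ := f.le_opNorm _
    _ ≤ 1 * r := by gcongr; rwa [norm_sub_rev]
    _ = r := one_mul r
  refine ⟨hy, ?_⟩
  rw [map_sub, map_sub] at hre
  linarith [hz.2]

theorem smul_add_smul_mem_ballSlice {f : X →L[𝕜] 𝕜} (hf : ‖f‖ ≤ 1) {β t : ℝ} {x p : X}
    (hx : ‖x‖ ≤ 1) (hp : p ∈ ballSlice f β) (ht₀ : 0 ≤ t) (ht₁ : t ≤ 1) :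
    (t : 𝕜) • x + ((1 - t : ℝ) : 𝕜) • p ∈ ballSlice f (β + 2 * t) := by
  refine mem_ballSlice_of_norm_sub_le hf hp ?_ ?_
  · calc ‖(t : 𝕜) • x + ((1 - t : ℝ) : 𝕜) • p‖ ≤ t * ‖x‖ + (1 - t) * ‖p‖ := by
          refine (norm_add_le _ _).trans_eq ?_
          rw [norm_smul, norm_smul, norm_ofReal, norm_ofReal, abs_of_nonneg ht₀,
            abs_of_nonneg (sub_nonneg.2 ht₁)]
      _ ≤ 1 := by nlinarith [hp.1]
  · have hdiff : (t : 𝕜) • x + ((1 - t : ℝ) : 𝕜) • p - p = (t : 𝕜) • (x - p) := by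
      push_cast; module
    rw [hdiff, norm_smul, norm_ofReal, abs_of_nonneg ht₀]
    nlinarith [norm_sub_le x p, hp.1]

def sliceMidpoints (f : X →L[𝕜] 𝕜) (β : ℝ) : Set X :=
  {z : X | ∃ y₁ ∈ ballSlice f β, ∃ y₂ ∈ ballSlice (-f) β,
    z = ((2 : 𝕜)⁻¹) • y₁ + ((2 : 𝕜)⁻¹) • y₂}

theorem sliceMidpoints_mono {f : X →L[𝕜] 𝕜} {β γ : ℝ} (h : β ≤ γ) :
    sliceMidpoints f β ⊆ sliceMidpoints f γ :=
  fun _ ⟨y₁, hy₁, y₂, hy₂, hz⟩ => ⟨y₁, ballSlice_mono h hy₁, y₂, ballSlice_mono h hy₂, hz⟩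

theorem smul_mem_sliceMidpoints {f : X →L[𝕜] 𝕜} (hf : ‖f‖ ≤ 1) {β t : ℝ} {x p : X}
    (hx : ‖x‖ ≤ 1) (hp : p ∈ ballSlice f β) (ht₀ : 0 ≤ t) (ht₁ : t ≤ 1) :
    (t : 𝕜) • x ∈ sliceMidpoints f (β + 2 * t) := by
  have hx' : ‖-x‖ ≤ 1 := by rwa [norm_neg]
  refine ⟨_, smul_add_smul_mem_ballSlice hf hx hp ht₀ ht₁, _,
    neg_mem_ballSlice_neg (smul_add_smul_mem_ballSlice hf hx' hp ht₀ ht₁), ?_⟩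
  module

theorem two_sub_div_lt_norm_sub {t δ : ℝ} (ht₀ : 0 < t) (ht : t ≤ 2⁻¹) {x a b : X}
    (ha : ‖a‖ ≤ 1) (hb : ‖b‖ ≤ 1)
    (h : 1 + t - δ < ‖(t : 𝕜) • x - ((2 : 𝕜)⁻¹ • a + (2 : 𝕜)⁻¹ • b)‖) :
    2 - δ / t < ‖x - a‖ := by
  have hsplit : (t : 𝕜) • x - ((2 : 𝕜)⁻¹ • a + (2 : 𝕜)⁻¹ • b) =
      (t : 𝕜) • (x - a) - ((2⁻¹ - t : ℝ) : 𝕜) • a - (2 : 𝕜)⁻¹ • b := by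
    push_cast; module
  have hbound : ‖(t : 𝕜) • x - ((2 : 𝕜)⁻¹ • a + (2 : 𝕜)⁻¹ • b)‖ ≤
      t * ‖x - a‖ + (2⁻¹ - t) * ‖a‖ + 2⁻¹ * ‖b‖ := by
    rw [hsplit]
    refine (norm_sub_le_of_le (norm_sub_le _ _) le_rfl).trans_eq ?_
    rw [norm_smul, norm_smul, norm_smul, norm_ofReal, norm_ofReal, norm_inv, RCLike.norm_two,
      abs_of_pos ht₀, abs_of_nonneg (sub_nonneg.2 ht)]
  rw [sub_lt_comm, lt_div_iff₀ ht₀]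
  nlinarith

end

theorem diametral_on_symmetric_combinations_implies_slice_daugavet_general
    {𝕜 : Type*} [RCLike 𝕜] {X : Type*}
    [NormedAddCommGroup X] [NormedSpace 𝕜 X]
    (h : ∀ (f : X →L[𝕜] 𝕜), ‖f‖ = 1 → ∀ β > (0 : ℝ), ∀ δ > (0 : ℝ),
      ∀ x ∈ {z : X | ∃ y₁ ∈ ballSlice f β, ∃ y₂ ∈ ballSlice (-f) β,
        z = ((2 : 𝕜)⁻¹) • y₁ + ((2 : 𝕜)⁻¹) • y₂},
      ∃ y ∈ {z : X | ∃ y₁ ∈ ballSlice f β, ∃ y₂ ∈ ballSlice (-f) β,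
        z = ((2 : 𝕜)⁻¹) • y₁ + ((2 : 𝕜)⁻¹) • y₂},
      ‖x - y‖ > 1 + ‖x‖ - δ)
    (f : X →L[𝕜] 𝕜) (hf : ‖f‖ = 1) (α : ℝ) (hα : 0 < α)
    (ε : ℝ) (hε : 0 < ε) (x : X) (hx : ‖x‖ = 1) :
    ∃ s : X, ‖s‖ ≤ 1 ∧ 1 - α < RCLike.re (f s) ∧ 2 - ε < ‖x - s‖ := by
  obtain ⟨p, hp⟩ : ∃ p, p ∈ ballSlice f (α / 2) :=
    exists_norm_le_one_lt_re_apply f (by linarith)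
  set t := min 2⁻¹ (α / 4)
  have ht₀ : 0 < t := lt_min (by norm_num) (by positivity)
  have ht : t ≤ 2⁻¹ := min_le_left _ _
  have htα : t ≤ α / 4 := min_le_right _ _
  have hmem : (t : 𝕜) • x ∈ sliceMidpoints f α :=
    sliceMidpoints_mono (by linarith)
      (smul_mem_sliceMidpoints hf.le hx.le hp ht₀.le (by linarith))
  obtain ⟨_, ⟨a, ha, b, hb, rfl⟩, hfar⟩ := h f hf α hα (t * ε) (by positivity) _ hmem
  rw [norm_smul, norm_ofReal, abs_of_pos ht₀, hx, mul_one] at hfar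
  refine ⟨a, ha.1, ha.2, ?_⟩
  simpa [mul_div_cancel_left₀ _ ht₀.ne'] using two_sub_div_lt_norm_sub ht₀ ht ha.1 hb.1 hfar

/-- Suppose that in a Banach space `X`, for every norm-one functional `f` and every
`β > 0`, the set `C = ½·S(f, β) + ½·S(-f, β)` has the property that for every `δ > 0`
and every `x ∈ C` there is `y ∈ C` with `‖x - y‖ > 1 + ‖x‖ - δ`. Then for every
norm-one functional `f`, every `α > 0`, every `ε > 0` and every `x` of norm one there
is `s` in the closed unit ball with `Re (f s) > 1 - α` and `‖x - s‖ > 2 - ε`. -/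
theorem diametral_on_symmetric_combinations_implies_slice_daugavet
    {𝕜 : Type*} [RCLike 𝕜] {X : Type*}
    [NormedAddCommGroup X] [NormedSpace 𝕜 X] [CompleteSpace X]
    (h : ∀ (f : X →L[𝕜] 𝕜), ‖f‖ = 1 → ∀ β > (0 : ℝ), ∀ δ > (0 : ℝ),
      ∀ x ∈ {z : X | ∃ y₁ ∈ ballSlice f β, ∃ y₂ ∈ ballSlice (-f) β,
        z = ((2 : 𝕜)⁻¹) • y₁ + ((2 : 𝕜)⁻¹) • y₂},
      ∃ y ∈ {z : X | ∃ y₁ ∈ ballSlice f β, ∃ y₂ ∈ ballSlice (-f) β,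
        z = ((2 : 𝕜)⁻¹) • y₁ + ((2 : 𝕜)⁻¹) • y₂},
      ‖x - y‖ > 1 + ‖x‖ - δ)
    (f : X →L[𝕜] 𝕜) (hf : ‖f‖ = 1) (α : ℝ) (hα : 0 < α)
    (ε : ℝ) (hε : 0 < ε) (x : X) (hx : ‖x‖ = 1) :
    ∃ s : X, ‖s‖ ≤ 1 ∧ 1 - α < RCLike.re (f s) ∧ 2 - ε < ‖x - s‖ :=
  diametral_on_symmetric_combinations_implies_slice_daugavet_general h f hf α hα ε hε x hx
end

section
/- Let X be a nonzero Banach space, let x* ∈ X* be a functional with ‖x*‖ = 1 and let β > 0. Then there exists r with 0 < r < 1/2 such that the closed ball rB_X = {x ∈ X : ‖x‖ ≤ r} is contained in the convex combination of slices C = (1/2)S(x*, β) + (1/2)S(−x*, β). -/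
/-- In a nonzero Banach space `X`, for every norm-one functional `f` and every `β > 0`,
there is `0 < r < 1/2` such that the closed ball of radius `r` is contained in the
convex combination of slices `C = ½·S(f, β) + ½·S(-f, β)`. -/
theorem closedBall_subset_symmetric_combination {𝕜 : Type*} [RCLike 𝕜] {X : Type*}
    [NormedAddCommGroup X] [NormedSpace 𝕜 X] [CompleteSpace X] [Nontrivial X]
    (f : X →L[𝕜] 𝕜) (hf : ‖f‖ = 1) (β : ℝ) (hβ : 0 < β) :
    ∃ r : ℝ, 0 < r ∧ r < 1 / 2 ∧
      Metric.closedBall (0 : X) r ⊆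
        {z : X | ∃ y₁ ∈ ballSlice f β, ∃ y₂ ∈ ballSlice (-f) β,
          z = ((2 : 𝕜)⁻¹) • y₁ + ((2 : 𝕜)⁻¹) • y₂} := by
  set m := min β 1 with hm
  have hm0 : 0 < m := lt_min hβ one_pos
  have hm1 : m ≤ 1 := min_le_right _ _
  have hmβ : m ≤ β := min_le_left _ _
  set ε := m / 2 with hε
  set r := m / 8 with hr
  refine ⟨r, by positivity, by rw [hr]; linarith, ?_⟩
  intro x hx
  simp only [Metric.mem_closedBall, dist_zero_right] at hx
  have h1 : 1 - ε < ‖f‖ := by rw [hf]; simp only [hε]; linarith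
  obtain ⟨v, hv1, hv2⟩ := f.exists_lt_apply_of_lt_opNorm h1
  set k := f v with hk
  have hkpos : 0 < ‖k‖ := lt_of_le_of_lt (by linarith) hv2
  have hk0 : k ≠ 0 := norm_pos_iff.mp hkpos
  set c : 𝕜 := (starRingEnd 𝕜) k / (‖k‖ : 𝕜) with hc
  have hck : c * k = (‖k‖ : 𝕜) := by
    rw [hc, div_mul_eq_mul_div, RCLike.conj_mul, sq]
    rw [mul_div_assoc, div_self (by exact_mod_cast hkpos.ne'), mul_one]
  have hcnorm : ‖c‖ = 1 := by
    rw [hc, norm_div, RCLike.norm_conj, RCLike.norm_ofReal, abs_of_pos hkpos,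
      div_self hkpos.ne']
  set u : X := ((1 - r : ℝ) : 𝕜) • (c • v) with hu
  have hr1 : r < 1 := by rw [hr]; linarith
  have hunorm : ‖u‖ ≤ 1 - r := by
    rw [hu, norm_smul, norm_smul, hcnorm, one_mul, RCLike.norm_ofReal,
      abs_of_pos (by linarith)]
    nlinarith [hv1.le, norm_nonneg v]
  have hfu : (1 - r) * ‖k‖ = RCLike.re (f u) := by
    have : f u = (((1 - r) * ‖k‖ : ℝ) : 𝕜) := by
      rw [hu, map_smul, map_smul, smul_eq_mul, smul_eq_mul, ← hk, hck, RCLike.ofReal_mul]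
    rw [this, RCLike.ofReal_re]
  have hfx : |RCLike.re (f x)| ≤ r := by
    calc |RCLike.re (f x)| ≤ ‖f x‖ := RCLike.abs_re_le_norm _
    _ ≤ ‖f‖ * ‖x‖ := f.le_opNorm x
    _ ≤ r := by rw [hf, one_mul]; exact hx
  have habs := abs_le.mp hfx
  have hfulb : 1 - ε - 2 * r < RCLike.re (f u) := by
    rw [← hfu]
    nlinarith
  have key : 1 - β < RCLike.re (f u) - r := by
    have : ε + 3 * r < β := by rw [hε, hr]; linarith
    linarith
  refine ⟨x + u, ⟨?_, ?_⟩, x - u, ⟨?_, ?_⟩, ?_⟩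
  · calc ‖x + u‖ ≤ ‖x‖ + ‖u‖ := norm_add_le _ _
      _ ≤ 1 := by linarith
  · rw [map_add, map_add]; linarith
  · calc ‖x - u‖ ≤ ‖x‖ + ‖u‖ := norm_sub_le _ _
      _ ≤ 1 := by linarith
  · simp only [ContinuousLinearMap.neg_apply, map_sub, map_neg]
    linarith
  · have h2 : ((2 : 𝕜)⁻¹) • (x + u) + ((2 : 𝕜)⁻¹) • (x - u) = x := by
      rw [smul_add, smul_sub]
      rw [show ∀ a b : X, a + ((2:𝕜)⁻¹) • u + (b - ((2:𝕜)⁻¹) • u) = a + b by intro a b; abel]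
      rw [← add_smul]
      norm_num
    exact h2.symm
end
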